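/- Let K be a difference subfield of U with σ(K) = K, and a a finite tuple with σ(a) ∈ K(a)^alg and μ(σ(a)/K(a)) = ld(a/K). Let m := sup_{ℓ≥1} μ(σ(a)/K(a,σ^ℓ(a))) (finite, since bounded by μ(σ(a)/K(a))), let ℓ0 be the least ℓ ≥ 1 at which this supremum is attained, and let C := μ((σ(a),…,σ^{ℓ0−1}(a))/K(a,σ^{ℓ0}(a))). Then for all ℓ, j ≥ ℓ0, C·μ(a/K(σ^{-j}(a),σ^ℓ(a))) = m^{ℓ0}. -/

import Mathlib

/- Setting: a large algebraically closed field `U` with an automorphism `σ`.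
   Tuples are maps `Fin n → U`; for a tuple `t`, the relevant set of coordinates
   is `Set.range t`.  `fAdj E s` is the subfield `E(s)` generated by a subfield
   `E` and a set `s`, and `deg E s` is the degree `μ(s/E) = [E(s):E]`. -/

set_option maxHeartbeats 1000000
set_option synthInstance.maxHeartbeats 1000000

open Filter Set

variable {U : Type*}

/-- The subfield `E(s)` generated by the subfield `E` and the set `s`. -/
noncomputable def fAdj [Field U] (E : Subfield U) (s : Set U) : Subfield U :=
  (IntermediateField.adjoin E s).toSubfield

/-- The degree `μ(s/E) = [E(s):E]` (as `Module.finrank`; it is `0` when infinite). -/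
noncomputable def deg [Field U] (E : Subfield U) (s : Set U) : ℕ :=
  Module.finrank E (IntermediateField.adjoin E s)

/-- `k ↦ μ(σ^{k+1}(s) / K(s, σ(s), …, σ^k(s)))`: the sequence whose eventual
value is the limit degree `ld(s/K)`. -/
noncomputable def ldSeq [Field U] (σ : U ≃+* U) (K : Subfield U) (s : Set U) (k : ℕ) : ℕ :=
  deg (fAdj K (⋃ i ∈ Set.Iic k, ⇑(σ ^ i) '' s)) (⇑(σ ^ (k + 1)) '' s)

/-- `k ↦ μ(σ^k(s) / K(s))`: the sequence whose `k`-th roots converge to the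
distant degree `dd(s/K)`. -/
noncomputable def ddSeq [Field U] (σ : U ≃+* U) (K : Subfield U) (s : Set U) (k : ℕ) : ℕ :=
  deg (fAdj K s) (⇑(σ ^ k) '' s)

/-- The inversive closure `K^inv = ⋃ₙ σ^{-n}(K)`. -/
noncomputable def Kinv [Field U] (σ : U ≃+* U) (K : Subfield U) : Subfield U :=
  ⨆ n : ℕ, K.map (σ⁻¹ ^ n : U ≃+* U).toRingHom

/-- The difference field `K(s)_σ = K(σ^i(s) : i ∈ ℕ)` generated by `s` over `K`. -/
noncomputable def diffAdj [Field U] (σ : U ≃+* U) (K : Subfield U) (s : Set U) : Subfield U :=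
  fAdj K (⋃ i : ℕ, ⇑(σ ^ i) '' s)


/-
Write `D(I; J) = μ(σ^J(a) / K(σ^I(a)))` for sets `I, J` of exponents. Since `σ(K) = K`, `D` is
invariant under translating `I` and `J`; it is multiplicative in towers, and it can only drop
when `I` grows. As `ℓ ↦ D(0..ℓ; ℓ+1)` is therefore nonincreasing and starts at `ld = ld(a/K)`, it is
constantly `ld`. Hence `P(k) · e(k) = ld^k`, where `P(k) = D(0, k; 1..k-1)` and `e(k) = D(0; k)`.
Computing `D(0; j, j+ℓ)` in both orders gives `T · e(j+ℓ) ≤ e(j) · e(ℓ)` for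
`T = D(0, j+ℓ; j)`, while splitting `P(j+ℓ)` at `j` gives `P(j+ℓ) ≤ P(j) · P(ℓ) · T`; multiplying
out, both are equalities. For `j = 1` this reads `D(0, ℓ+1; 1) · e(ℓ+1) = ld · e(ℓ)`; as
`ℓ ↦ D(0, ℓ; 1)` is nondecreasing and bounded by `m`, it equals `m` from `ℓ0` on, so `e` is
geometric with ratio `ld / m` beyond `ℓ0`. Substituting into `T · e(j+ℓ) = e(j) · e(ℓ)` gives
`C · T = m^ℓ0`, and applying `σ^j` identifies `T` with `μ(a / K(σ^{-j}(a), σ^ℓ(a)))`.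
-/

section Degree

variable [Field U] {E E' : Subfield U} {s t : Set U} {x : U}

lemma fAdj_eq_closure (E : Subfield U) (s : Set U) : fAdj E s = Subfield.closure (E ∪ s) := by
  rw [fAdj, IntermediateField.adjoin_toSubfield]
  congr
  exact Subtype.range_coe

lemma le_fAdj : E ≤ fAdj E s := by
  rw [fAdj_eq_closure]
  exact fun y hy => Subfield.subset_closure (Or.inl hy)

lemma subset_fAdj (E : Subfield U) (s : Set U) : s ⊆ fAdj E s := by
  rw [fAdj_eq_closure]
  exact fun y hy => Subfield.subset_closure (Or.inr hy)

lemma fAdj_le {F : Subfield U} (hE : E ≤ F) (hs : s ⊆ F) : fAdj E s ≤ F := by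
  rw [fAdj_eq_closure]
  exact Subfield.closure_le.mpr (union_subset hE hs)

lemma fAdj_mono (hE : E ≤ E') (hs : s ⊆ t) : fAdj E s ≤ fAdj E' t :=
  fAdj_le (hE.trans le_fAdj) (hs.trans (subset_fAdj E' t))

lemma fAdj_fAdj (E : Subfield U) (s t : Set U) : fAdj (fAdj E t) s = fAdj E (s ∪ t) :=
  le_antisymm (fAdj_le (fAdj_mono le_rfl subset_union_right)
      (subset_union_left.trans (subset_fAdj E _)))
    (fAdj_le (le_fAdj.trans le_fAdj)
      (union_subset (subset_fAdj _ s) ((subset_fAdj E t).trans le_fAdj)))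

lemma fAdj_map (f : U →+* U) (E : Subfield U) (s : Set U) :
    (fAdj E s).map f = fAdj (E.map f) (f '' s) := by
  rw [fAdj_eq_closure, fAdj_eq_closure, RingHom.map_field_closure, image_union,
    Subfield.coe_map]

lemma deg_eq_relfinrank (E : Subfield U) (s : Set U) :
    deg E s = E.relfinrank (fAdj E s) := by
  rw [Subfield.relfinrank_eq_finrank_of_le le_fAdj, deg]
  rfl

lemma deg_union (E : Subfield U) (s t : Set U) :
    deg E (s ∪ t) = deg (fAdj E t) s * deg E t := by
  rw [deg_eq_relfinrank, deg_eq_relfinrank E t, deg_eq_relfinrank (fAdj E t), fAdj_fAdj,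
    mul_comm, Subfield.relfinrank_mul_relfinrank le_fAdj (fAdj_mono le_rfl subset_union_right)]

lemma deg_map (f : U →+* U) (E : Subfield U) (s : Set U) :
    deg (E.map f) (f '' s) = deg E s := by
  rw [deg_eq_relfinrank, deg_eq_relfinrank, ← fAdj_map]
  exact Subfield.relfinrank_map_map E (fAdj E s) f

lemma deg_empty (E : Subfield U) : deg E ∅ = 1 := by
  rw [deg, IntermediateField.adjoin_empty, IntermediateField.finrank_bot]

lemma IsIntegral.of_subfield_le (h : E ≤ E') (hx : IsIntegral E x) : IsIntegral E' x :=
  IsIntegral.map_of_comp_eq (Subfield.inclusion h) (RingHom.id U) rfl hx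

lemma IsIntegral.map_subfield (f : U →+* U) (hx : IsIntegral E x) :
    IsIntegral (E.map f) (f x) :=
  IsIntegral.map_of_comp_eq (f.restrict E (E.map f) fun y hy => ⟨y, hy, rfl⟩) f rfl hx

lemma IsIntegral.of_isIntegral_fAdj (hs : ∀ y ∈ s, IsIntegral E y)
    (hx : IsIntegral (fAdj E s) x) : IsIntegral E x :=
  have : Algebra.IsAlgebraic E (IntermediateField.adjoin E s) :=
    IntermediateField.isAlgebraic_adjoin hs
  isIntegral_trans (R := E) (A := IntermediateField.adjoin E s) x hx

lemma deg_pos (hs : s.Finite) (hi : ∀ y ∈ s, IsIntegral E y) : 0 < deg E s :=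
  have : Finite s := hs
  have := IntermediateField.finiteDimensional_adjoin hi
  Module.finrank_pos

lemma deg_singleton_le_of_le (h : E ≤ E') (hx : IsIntegral E x) : deg E' {x} ≤ deg E {x} := by
  have hx' : IsIntegral E' x := hx.of_subfield_le h
  rw [deg, deg, IntermediateField.adjoin.finrank hx, IntermediateField.adjoin.finrank hx']
  have hp : ((minpoly E x).map (Subfield.inclusion h)).natDegree = (minpoly E x).natDegree :=
    Polynomial.natDegree_map _
  refine hp ▸ Polynomial.natDegree_le_of_dvd (minpoly.dvd _ _ ?_)
    ((minpoly.monic hx).map _).ne_zero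
  rw [Polynomial.aeval_def, Polynomial.eval₂_map]
  exact minpoly.aeval E x

lemma deg_le_of_le (h : E ≤ E') (hs : s.Finite) (hi : ∀ y ∈ s, IsIntegral E y) :
    deg E' s ≤ deg E s := by
  induction s, hs using Set.Finite.induction_on with
  | empty => rw [deg_empty, deg_empty]
  | @insert z s _ _ ih =>
    rw [insert_eq, deg_union, deg_union]
    exact Nat.mul_le_mul
      (deg_singleton_le_of_le (fAdj_mono h le_rfl) ((hi z (mem_insert z s)).of_subfield_le le_fAdj))
      (ih fun y hy => hi y (mem_insert_of_mem z hy))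

end Degree

section Iterates

variable [Field U] {σ : U ≃+* U} {K : Subfield U} {s : Set U}

variable (σ s) in
def iterImage (I : Set ℕ) : Set U := ⋃ i ∈ I, ⇑(σ ^ i) '' s

variable (σ K s) in
/-- `relDeg σ K s I J = μ(σ^J(s) / K(σ^I(s)))`, where `σ^I(s) = ⋃_{i ∈ I} σ^i(s)`. -/
noncomputable def relDeg (I J : Set ℕ) : ℕ :=
  deg (fAdj K (iterImage σ s I)) (iterImage σ s J)

lemma iterImage_union (I J : Set ℕ) :
    iterImage σ s (I ∪ J) = iterImage σ s I ∪ iterImage σ s J :=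
  biUnion_union I J _

@[simp]
lemma iterImage_singleton (i : ℕ) : iterImage σ s {i} = ⇑(σ ^ i) '' s :=
  biUnion_singleton i _

@[simp]
lemma iterImage_empty : iterImage σ s ∅ = ∅ :=
  biUnion_empty _

@[simp]
lemma iterImage_insert (i : ℕ) (I : Set ℕ) :
    iterImage σ s (insert i I) = ⇑(σ ^ i) '' s ∪ iterImage σ s I :=
  biUnion_insert i I _

lemma image_pow_zero : ⇑(σ ^ 0) '' s = s := by
  rw [pow_zero, RingAut.coe_one, image_id]

lemma iterImage_pair_zero (k : ℕ) : iterImage σ s {0, k} = s ∪ ⇑(σ ^ k) '' s := by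
  rw [iterImage_insert, iterImage_singleton, image_pow_zero]

lemma iterImage_finite (hs : s.Finite) {I : Set ℕ} (hI : I.Finite) : (iterImage σ s I).Finite :=
  hI.biUnion fun _ _ => hs.image _

lemma image_pow_image (k i : ℕ) : ⇑(σ ^ k) '' (⇑(σ ^ i) '' s) = ⇑(σ ^ (k + i)) '' s := by
  rw [image_image, pow_add]
  rfl

lemma image_iterImage (k : ℕ) (I : Set ℕ) :
    ⇑(σ ^ k) '' iterImage σ s I = iterImage σ s ((k + ·) '' I) := by
  simp only [iterImage, image_iUnion₂, image_pow_image, biUnion_image]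

lemma relDeg_union (I X Y : Set ℕ) :
    relDeg σ K s I (X ∪ Y) = relDeg σ K s (Y ∪ I) X * relDeg σ K s I Y := by
  rw [relDeg, relDeg, relDeg, iterImage_union, deg_union, fAdj_fAdj, ← iterImage_union]

lemma ldSeq_eq_relDeg (k : ℕ) : ldSeq σ K s k = relDeg σ K s (Iic k) {k + 1} := by
  rw [relDeg, iterImage_singleton]
  rfl

lemma Subfield.map_pow_eq_self (hK : K.map σ.toRingHom = K) (k : ℕ) :
    K.map ((σ ^ k : U ≃+* U) : U →+* U) = K := by
  induction k with
  | zero => exact SetLike.coe_injective (image_id _)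
  | succ k ih =>
    calc K.map ((σ ^ (k + 1) : U ≃+* U) : U →+* U)
        = (K.map ((σ ^ k : U ≃+* U) : U →+* U)).map σ.toRingHom := by
          rw [Subfield.map_map, pow_succ']
          rfl
      _ = K := by rw [ih, hK]

lemma deg_image_pow (hK : K.map σ.toRingHom = K) (k : ℕ) (t u : Set U) :
    deg (fAdj K (⇑(σ ^ k) '' t)) (⇑(σ ^ k) '' u) = deg (fAdj K t) u := by
  rw [← deg_map ((σ ^ k : U ≃+* U) : U →+* U) (fAdj K t) u, fAdj_map,
    Subfield.map_pow_eq_self hK]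
  rfl

lemma relDeg_image_add (hK : K.map σ.toRingHom = K) (k : ℕ) (I J : Set ℕ) :
    relDeg σ K s ((k + ·) '' I) ((k + ·) '' J) = relDeg σ K s I J := by
  rw [relDeg, relDeg, ← image_iterImage, ← image_iterImage, deg_image_pow hK]

end Iterates

lemma image_const_add_Iic (c k : ℕ) : (c + ·) '' Iic k = Icc c (c + k) := by
  rw [← Icc_bot, image_const_add_Icc]
  rfl

lemma Iic_zero : Iic 0 = ({0} : Set ℕ) :=
  Iic_bot

section Integrality

variable [Field U] {σ : U ≃+* U} {K : Subfield U} {s : Set U}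
variable (hK : K.map σ.toRingHom = K) (hint : ∀ x ∈ σ '' s, IsIntegral (fAdj K s) x)
include hK hint

lemma isIntegral_of_mem_pow_image {i j : ℕ} (hji : j ≤ i) {x : U} (hx : x ∈ ⇑(σ ^ i) '' s) :
    IsIntegral (fAdj K (⇑(σ ^ j) '' s)) x := by
  induction i, hji using Nat.le_induction generalizing x with
  | base => exact isIntegral_algebraMap (x := (⟨x, subset_fAdj _ _ hx⟩ : fAdj K _))
  | succ i _ ih =>
    rw [← image_pow_image, pow_one] at hx
    obtain ⟨y, hy, rfl⟩ := hx
    have h := (hint y hy).map_subfield ((σ ^ i : U ≃+* U) : U →+* U)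
    rw [fAdj_map, Subfield.map_pow_eq_self hK] at h
    exact (h.of_subfield_le (fAdj_mono le_fAdj le_rfl)).of_isIntegral_fAdj fun _ => ih

lemma isIntegral_of_mem_iterImage {I J : Set ℕ} {j : ℕ} (hj : j ∈ I) (hJ : ∀ i ∈ J, j ≤ i)
    {x : U} (hx : x ∈ iterImage σ s J) : IsIntegral (fAdj K (iterImage σ s I)) x := by
  obtain ⟨i, hi, hxi⟩ := mem_iUnion₂.mp hx
  exact (isIntegral_of_mem_pow_image hK hint (hJ i hi) hxi).of_subfield_le
    (fAdj_mono le_rfl (subset_biUnion_of_mem hj))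

variable (hs : s.Finite)
include hs

lemma relDeg_pos {I J : Set ℕ} (hI : 0 ∈ I) (hJ : J.Finite) : 0 < relDeg σ K s I J :=
  deg_pos (iterImage_finite hs hJ) fun _ =>
    isIntegral_of_mem_iterImage hK hint hI fun _ _ => Nat.zero_le _

lemma relDeg_anti_left {I I' J : Set ℕ} (hII' : I ⊆ I') {j : ℕ} (hj : j ∈ I)
    (hJ : ∀ i ∈ J, j ≤ i) (hJf : J.Finite) : relDeg σ K s I' J ≤ relDeg σ K s I J :=
  deg_le_of_le (fAdj_mono le_rfl (biUnion_subset_biUnion_left hII')) (iterImage_finite hs hJf)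
    fun _ => isIntegral_of_mem_iterImage hK hint hj hJ

end Integrality

section Submultiplicativity

variable [Field U] {σ : U ≃+* U} {K : Subfield U} {s : Set U}
variable (hK : K.map σ.toRingHom = K) (hint : ∀ x ∈ σ '' s, IsIntegral (fAdj K s) x)
  (hs : s.Finite)
include hK hint hs

lemma relDeg_pair_mul_le (j ℓ : ℕ) :
    relDeg σ K s {0, j + ℓ} {j} * relDeg σ K s {0} {j + ℓ} ≤
      relDeg σ K s {0} {j} * relDeg σ K s {0} {ℓ} := by
  have hshift : relDeg σ K s {j} {j + ℓ} = relDeg σ K s {0} {ℓ} := by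
    simpa using relDeg_image_add hK j (s := s) {0} {ℓ}
  calc relDeg σ K s {0, j + ℓ} {j} * relDeg σ K s {0} {j + ℓ}
      = relDeg σ K s {0} ({j} ∪ {j + ℓ}) := by rw [relDeg_union, singleton_union, pair_comm]
    _ = relDeg σ K s {j, 0} {j + ℓ} * relDeg σ K s {0} {j} := by
      rw [union_comm, relDeg_union, singleton_union]
    _ ≤ relDeg σ K s {0} {ℓ} * relDeg σ K s {0} {j} := by
      refine Nat.mul_le_mul_right _ (hshift ▸ ?_)
      exact relDeg_anti_left hK hint hs (by simp) rfl (by simp) (finite_singleton _)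
    _ = relDeg σ K s {0} {j} * relDeg σ K s {0} {ℓ} := mul_comm _ _

lemma relDeg_pair_Icc_add_le {j ℓ : ℕ} (hj : 1 ≤ j) (hℓ : 1 ≤ ℓ) :
    relDeg σ K s {0, j + ℓ} (Icc 1 (j + ℓ - 1)) ≤
      relDeg σ K s {0, j} (Icc 1 (j - 1)) * relDeg σ K s {0, ℓ} (Icc 1 (ℓ - 1)) *
        relDeg σ K s {0, j + ℓ} {j} := by
  have hsplit : Icc 1 (j + ℓ - 1) = (Icc 1 (j - 1) ∪ Icc (j + 1) (j + ℓ - 1)) ∪ {j} := by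
    ext i
    simp only [mem_Icc, mem_union, mem_singleton_iff]
    omega
  have hshift : relDeg σ K s {j, j + ℓ} (Icc (j + 1) (j + ℓ - 1)) =
      relDeg σ K s {0, ℓ} (Icc 1 (ℓ - 1)) := by
    have h := relDeg_image_add hK j (s := s) {0, ℓ} (Icc 1 (ℓ - 1))
    rwa [image_pair, image_const_add_Icc, add_zero, show j + (ℓ - 1) = j + ℓ - 1 by omega] at h
  rw [hsplit, relDeg_union, relDeg_union]
  refine Nat.mul_le_mul_right _ (Nat.mul_le_mul ?_ (hshift ▸ ?_))
  · refine relDeg_anti_left hK hint hs (fun i hi => ?_) (mem_insert 0 _) (by simp)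
      (finite_Icc _ _)
    simp only [mem_union, mem_insert_iff, mem_singleton_iff, mem_Icc] at hi ⊢
    omega
  · refine relDeg_anti_left hK hint hs (fun i hi => ?_) (mem_insert j _) (fun i hi => ?_)
      (finite_Icc _ _)
    · simp only [mem_union, mem_insert_iff, mem_singleton_iff] at hi ⊢
      omega
    · simp only [mem_Icc] at hi
      omega

end Submultiplicativity

section LimitDegree

variable [Field U] {σ : U ≃+* U} {K : Subfield U} {s : Set U} {La : ℕ}

lemma relDeg_zero_one (hld : ∀ k, relDeg σ K s (Iic k) {k + 1} = La) :
    relDeg σ K s {0} {1} = La := by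
  simpa [Iic_zero] using hld 0

lemma relDeg_zero_Icc (hld : ∀ k, relDeg σ K s (Iic k) {k + 1} = La) (k : ℕ) :
    relDeg σ K s {0} (Icc 1 k) = La ^ k := by
  induction k with
  | zero => simp [relDeg, deg_empty]
  | succ k ih =>
    have hIcc : Icc 1 (k + 1) = {k + 1} ∪ Icc 1 k := by
      ext i
      simp only [mem_Icc, mem_union, mem_singleton_iff]
      omega
    have hIic : Icc 1 k ∪ {0} = Iic k := by
      ext i
      simp only [mem_Icc, mem_union, mem_singleton_iff, mem_Iic]
      omega
    rw [hIcc, relDeg_union, hIic, hld, ih, pow_succ']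

lemma relDeg_pair_Icc_mul (hld : ∀ k, relDeg σ K s (Iic k) {k + 1} = La) {k : ℕ}
    (hk : 1 ≤ k) :
    relDeg σ K s {0, k} (Icc 1 (k - 1)) * relDeg σ K s {0} {k} = La ^ k := by
  have hIcc : Icc 1 k = Icc 1 (k - 1) ∪ {k} := by
    ext i
    simp only [mem_Icc, mem_union, mem_singleton_iff]
    omega
  rw [← relDeg_zero_Icc hld, hIcc, relDeg_union, singleton_union, pair_comm]

variable (hK : K.map σ.toRingHom = K) (hint : ∀ x ∈ σ '' s, IsIntegral (fAdj K s) x)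
  (hs : s.Finite)
include hK hint hs

lemma relDeg_Iic_succ_eq (h0 : relDeg σ K s {0} {1} = La)
    (hev : ∀ᶠ k in atTop, relDeg σ K s (Iic k) {k + 1} = La) (k : ℕ) :
    relDeg σ K s (Iic k) {k + 1} = La := by
  have hanti : Antitone fun k => relDeg σ K s (Iic k) {k + 1} := by
    refine antitone_nat_of_succ_le fun k => ?_
    calc relDeg σ K s (Iic (k + 1)) {k + 1 + 1}
        ≤ relDeg σ K s ((1 + ·) '' Iic k) ((1 + ·) '' {k + 1}) := by
          rw [image_const_add_Iic, image_singleton, add_comm 1 (k + 1)]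
          refine relDeg_anti_left hK hint hs (j := 1) (fun i hi => ?_) ?_ (by simp)
            (finite_singleton _)
          · simp only [mem_Icc, mem_Iic] at hi ⊢
            omega
          · simp
      _ = relDeg σ K s (Iic k) {k + 1} := relDeg_image_add hK 1 _ _
  obtain ⟨N, hN⟩ := eventually_atTop.mp hev
  refine le_antisymm ?_ ?_
  · simpa [Iic_zero, h0] using hanti (Nat.zero_le k)
  · exact hN (max k N) (le_max_right k N) ▸ hanti (le_max_left k N)

variable (hld : ∀ k, relDeg σ K s (Iic k) {k + 1} = La)
include hld

lemma limitDegree_pos : 0 < La :=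
  relDeg_zero_one hld ▸ relDeg_pos hK hint hs rfl (finite_singleton 1)

lemma relDeg_succ_of_mem {k : ℕ} {I : Set ℕ} (hk : k ∈ I) (hI : I ⊆ Iic k) :
    relDeg σ K s I {k + 1} = La := by
  refine le_antisymm ?_
    (hld k ▸ relDeg_anti_left hK hint hs hI hk (by simp) (finite_singleton _))
  calc relDeg σ K s I {k + 1}
      ≤ relDeg σ K s {k} {k + 1} :=
        relDeg_anti_left hK hint hs (singleton_subset_iff.mpr hk) rfl (by simp)
          (finite_singleton _)
    _ = La := by
      simpa [relDeg_zero_one hld] using relDeg_image_add hK k (s := s) {0} {1}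

lemma relDeg_pair_add_mul {j ℓ : ℕ} (hj : 1 ≤ j) (hℓ : 1 ≤ ℓ) :
    relDeg σ K s {0, j + ℓ} {j} * relDeg σ K s {0} {j + ℓ} =
      relDeg σ K s {0} {j} * relDeg σ K s {0} {ℓ} := by
  set P := fun k => relDeg σ K s {0, k} (Icc 1 (k - 1))
  have hP : 0 < P j * P ℓ := Nat.mul_pos
    (relDeg_pos hK hint hs (mem_insert 0 _) (finite_Icc _ _))
    (relDeg_pos hK hint hs (mem_insert 0 _) (finite_Icc _ _))
  refine le_antisymm (relDeg_pair_mul_le hK hint hs j ℓ) (Nat.le_of_mul_le_mul_left ?_ hP)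
  calc P j * P ℓ * (relDeg σ K s {0} {j} * relDeg σ K s {0} {ℓ})
      = La ^ (j + ℓ) := by
        rw [pow_add, ← relDeg_pair_Icc_mul hld hj, ← relDeg_pair_Icc_mul hld hℓ]
        ring
    _ = P (j + ℓ) * relDeg σ K s {0} {j + ℓ} := (relDeg_pair_Icc_mul hld (by omega)).symm
    _ ≤ P j * P ℓ * relDeg σ K s {0, j + ℓ} {j} * relDeg σ K s {0} {j + ℓ} :=
        Nat.mul_le_mul_right _ (relDeg_pair_Icc_add_le hK hint hs hj hℓ)
    _ = P j * P ℓ * (relDeg σ K s {0, j + ℓ} {j} * relDeg σ K s {0} {j + ℓ}) := by ring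

-- Adjoin `σ(s)` and `σ^(k+1)(s)` to `K(s, σ^k(s))` in both orders: the `σ^(k+1)(s)`-step has
-- degree `La` either way, so the `σ(s)`-steps agree.
lemma relDeg_pair_one_le_succ {k : ℕ} (hk : 1 ≤ k) :
    relDeg σ K s {0, k} {1} ≤ relDeg σ K s {0, k + 1} {1} := by
  have hcancel : relDeg σ K s {k + 1, 0, k} {1} = relDeg σ K s {0, k} {1} := by
    have h := congrArg (relDeg σ K s {0, k}) (union_comm ({1} : Set ℕ) {k + 1})
    rw [relDeg_union, relDeg_union, singleton_union, singleton_union,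
      relDeg_succ_of_mem hK hint hs hld (I := {0, k}) (by simp) (by simp [insert_subset_iff]),
      relDeg_succ_of_mem hK hint hs hld (I := {1, 0, k}) (by simp)
        (by simp [insert_subset_iff, hk])] at h
    exact Nat.eq_of_mul_eq_mul_right (limitDegree_pos hK hint hs hld) (h.trans (mul_comm _ _))
  rw [← hcancel]
  exact relDeg_anti_left hK hint hs (by simp [insert_subset_iff]) (mem_insert 0 _) (by simp)
    (finite_singleton _)

end LimitDegree

section DistantDegree

variable [Field U] {σ : U ≃+* U} {K : Subfield U} {s : Set U} {La m ℓ0 : ℕ}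
variable (hK : K.map σ.toRingHom = K) (hint : ∀ x ∈ σ '' s, IsIntegral (fAdj K s) x)
  (hs : s.Finite) (hld : ∀ k, relDeg σ K s (Iic k) {k + 1} = La)
  (hm : ∀ k, 1 ≤ k → relDeg σ K s {0, k} {1} ≤ m) (hℓ0 : 1 ≤ ℓ0)
  (hm0 : relDeg σ K s {0, ℓ0} {1} = m)
include hK hint hs hld hm hℓ0 hm0

lemma relDeg_pair_one_eq_of_le {ℓ : ℕ} (hℓ : ℓ0 ≤ ℓ) : relDeg σ K s {0, ℓ} {1} = m := by
  induction ℓ, hℓ using Nat.le_induction with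
  | base => exact hm0
  | succ ℓ hℓ ih =>
    exact le_antisymm (hm _ (by omega)) (ih ▸ relDeg_pair_one_le_succ hK hint hs hld (by omega))

lemma relDeg_zero_succ_mul {k : ℕ} (hk : ℓ0 ≤ k) :
    m * relDeg σ K s {0} {k + 1} = La * relDeg σ K s {0} {k} := by
  have h := relDeg_pair_add_mul hK hint hs hld le_rfl (show 1 ≤ k by omega)
  rwa [add_comm 1 k, relDeg_pair_one_eq_of_le hK hint hs hld hm hℓ0 hm0 (by omega),
    relDeg_zero_one hld] at h

lemma relDeg_zero_add_mul (t : ℕ) :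
    m ^ t * relDeg σ K s {0} {ℓ0 + t} = La ^ t * relDeg σ K s {0} {ℓ0} := by
  induction t with
  | zero => simp
  | succ t ih =>
    calc m ^ (t + 1) * relDeg σ K s {0} {ℓ0 + (t + 1)}
        = m ^ t * (m * relDeg σ K s {0} {ℓ0 + t + 1}) := by
          rw [← add_assoc]
          ring
      _ = La * (m ^ t * relDeg σ K s {0} {ℓ0 + t}) := by
        rw [relDeg_zero_succ_mul hK hint hs hld hm hℓ0 hm0 (by omega)]
        ring
      _ = La ^ (t + 1) * relDeg σ K s {0} {ℓ0} := by
        rw [ih]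
        ring

lemma relDeg_pair_mul_pow {ℓ j : ℕ} (hℓ : ℓ0 ≤ ℓ) (hj : ℓ0 ≤ j) :
    relDeg σ K s {0, j + ℓ} {j} * La ^ ℓ0 = relDeg σ K s {0} {ℓ0} * m ^ ℓ0 := by
  obtain ⟨r, rfl⟩ := Nat.exists_eq_add_of_le hj
  obtain ⟨t, rfl⟩ := Nat.exists_eq_add_of_le hℓ
  have hgeom := relDeg_zero_add_mul hK hint hs hld hm hℓ0 hm0
  set T := relDeg σ K s {0, ℓ0 + r + (ℓ0 + t)} {ℓ0 + r}
  set e := relDeg σ K s {0} {ℓ0}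
  have hpos : 0 < La ^ (r + t) * e :=
    Nat.mul_pos (pow_pos (limitDegree_pos hK hint hs hld) _)
      (relDeg_pos hK hint hs (mem_singleton 0) (finite_singleton _))
  refine Nat.eq_of_mul_eq_mul_right hpos ?_
  calc T * La ^ ℓ0 * (La ^ (r + t) * e) = T * (La ^ (ℓ0 + r + t) * e) := by ring
    _ = m ^ ℓ0 * m ^ r * m ^ t * (T * relDeg σ K s {0} {ℓ0 + r + (ℓ0 + t)}) := by
      rw [← hgeom, show ℓ0 + (ℓ0 + r + t) = ℓ0 + r + (ℓ0 + t) by omega]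
      ring
    _ = m ^ ℓ0 * (m ^ r * relDeg σ K s {0} {ℓ0 + r}) *
          (m ^ t * relDeg σ K s {0} {ℓ0 + t}) := by
      rw [relDeg_pair_add_mul hK hint hs hld (by omega) (by omega)]
      ring
    _ = e * m ^ ℓ0 * (La ^ (r + t) * e) := by
      rw [hgeom, hgeom]
      ring

theorem relDeg_pair_Icc_mul_relDeg_pair {ℓ j : ℕ} (hℓ : ℓ0 ≤ ℓ) (hj : ℓ0 ≤ j) :
    relDeg σ K s {0, ℓ0} (Icc 1 (ℓ0 - 1)) * relDeg σ K s {0, j + ℓ} {j} = m ^ ℓ0 := by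
  refine Nat.eq_of_mul_eq_mul_right (pow_pos (limitDegree_pos hK hint hs hld) ℓ0) ?_
  rw [mul_assoc, relDeg_pair_mul_pow hK hint hs hld hm hℓ0 hm0 hℓ hj, ← mul_assoc,
    relDeg_pair_Icc_mul hld hℓ0, mul_comm]

end DistantDegree

theorem stmt4_general [Field U] (σ : U ≃+* U) (K : Subfield U)
    (hK : K.map σ.toRingHom = K) {n : ℕ} (a : Fin n → U)
    (ha : ∀ i, IsAlgebraic (fAdj K (Set.range a)) (σ (a i)))
    (La : ℕ) (hLa : ∀ᶠ k in atTop, ldSeq σ K (Set.range a) k = La)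
    (hmu : deg (fAdj K (Set.range a)) (⇑σ '' Set.range a) = La)
    (m : ℕ)
    (hm : IsGreatest {x : ℕ | ∃ ℓ : ℕ, 1 ≤ ℓ ∧
        x = deg (fAdj K (Set.range a ∪ ⇑(σ ^ ℓ) '' Set.range a)) (⇑σ '' Set.range a)} m)
    (ℓ0 : ℕ) (hℓ0 : 1 ≤ ℓ0)
    (hℓ0m : deg (fAdj K (Set.range a ∪ ⇑(σ ^ ℓ0) '' Set.range a)) (⇑σ '' Set.range a) = m)
    (C : ℕ)
    (hC : C = deg (fAdj K (Set.range a ∪ ⇑(σ ^ ℓ0) '' Set.range a))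
        (⋃ i ∈ Set.Icc 1 (ℓ0 - 1), ⇑(σ ^ i) '' Set.range a)) :
    ∀ ℓ j : ℕ, ℓ0 ≤ ℓ → ℓ0 ≤ j →
      C * deg (fAdj K (⇑(σ⁻¹ ^ j) '' Set.range a ∪ ⇑(σ ^ ℓ) '' Set.range a)) (Set.range a) =
        m ^ ℓ0 := by
  intro ℓ j hℓ hj
  have hint : ∀ x ∈ σ '' range a, IsIntegral (fAdj K (range a)) x := by
    rintro _ ⟨_, ⟨i, rfl⟩, rfl⟩
    exact (ha i).isIntegral
  have hpair (k : ℕ) : relDeg σ K (range a) {0, k} {1} =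
      deg (fAdj K (range a ∪ ⇑(σ ^ k) '' range a)) (⇑σ '' range a) := by
    rw [relDeg, iterImage_pair_zero, iterImage_singleton, pow_one]
  have h01 : relDeg σ K (range a) {0} {1} = La := by
    rwa [relDeg, iterImage_singleton, iterImage_singleton, image_pow_zero, pow_one]
  have hld := relDeg_Iic_succ_eq hK hint (finite_range a) h01
    (by simpa only [ldSeq_eq_relDeg] using hLa)
  have hC' : C = relDeg σ K (range a) {0, ℓ0} (Icc 1 (ℓ0 - 1)) := by
    rw [hC, relDeg, iterImage_pair_zero]
    rfl
  have hgoal : deg (fAdj K (⇑(σ⁻¹ ^ j) '' range a ∪ ⇑(σ ^ ℓ) '' range a)) (range a) =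
      relDeg σ K (range a) {0, j + ℓ} {j} := by
    rw [← deg_image_pow hK j, image_union, image_pow_image, inv_pow, image_image, relDeg,
      iterImage_pair_zero, iterImage_singleton]
    simp
  rw [hC', hgoal]
  exact relDeg_pair_Icc_mul_relDeg_pair hK hint (finite_range a) hld
    (fun k hk => hpair k ▸ hm.2 ⟨k, hk, rfl⟩) hℓ0 ((hpair ℓ0).trans hℓ0m) hℓ hj

/-- with `m = sup_{ℓ≥1} μ(σ(a)/K(a,σ^ℓ(a)))` attained first at
`ℓ0`, and `C = μ((σ(a),…,σ^{ℓ0−1}(a))/K(a,σ^{ℓ0}(a)))`, one has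
`C·μ(a/K(σ^{-j}(a),σ^ℓ(a))) = m^{ℓ0}` for all `ℓ, j ≥ ℓ0`. -/
theorem stmt4 [Field U] [IsAlgClosed U] (σ : U ≃+* U) (K : Subfield U)
    (hK : K.map σ.toRingHom = K) {n : ℕ} (a : Fin n → U)
    (ha : ∀ i, IsAlgebraic (fAdj K (Set.range a)) (σ (a i)))
    (La : ℕ) (hLa : ∀ᶠ k in atTop, ldSeq σ K (Set.range a) k = La)
    (hmu : deg (fAdj K (Set.range a)) (⇑σ '' Set.range a) = La)
    (m : ℕ)
    (hm : IsGreatest {x : ℕ | ∃ ℓ : ℕ, 1 ≤ ℓ ∧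
        x = deg (fAdj K (Set.range a ∪ ⇑(σ ^ ℓ) '' Set.range a)) (⇑σ '' Set.range a)} m)
    (ℓ0 : ℕ) (hℓ0 : 1 ≤ ℓ0)
    (hℓ0m : deg (fAdj K (Set.range a ∪ ⇑(σ ^ ℓ0) '' Set.range a)) (⇑σ '' Set.range a) = m)
    (hℓ0min : ∀ ℓ : ℕ, 1 ≤ ℓ →
      deg (fAdj K (Set.range a ∪ ⇑(σ ^ ℓ) '' Set.range a)) (⇑σ '' Set.range a) = m → ℓ0 ≤ ℓ)
    (C : ℕ)
    (hC : C = deg (fAdj K (Set.range a ∪ ⇑(σ ^ ℓ0) '' Set.range a))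
        (⋃ i ∈ Set.Icc 1 (ℓ0 - 1), ⇑(σ ^ i) '' Set.range a)) :
    ∀ ℓ j : ℕ, ℓ0 ≤ ℓ → ℓ0 ≤ j →
      C * deg (fAdj K (⇑(σ⁻¹ ^ j) '' Set.range a ∪ ⇑(σ ^ ℓ) '' Set.range a)) (Set.range a) =
        m ^ ℓ0 :=
  stmt4_general σ K hK a ha La hLa hmu m hm ℓ0 hℓ0 hℓ0m C hC
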